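/- arXiv:2205.14003 — 2 statements merged into one kernel-verified Lean document; each statement's English description precedes it below -/
import Mathlib

section
/- Under the hypotheses of the witnessed-path lemma (G acting on X, G-fixed base point x₀, equivariant step and choice, and some maximal halting path (b₁*,…,bₖ*) whose choice sets choice(bᵢ*) are orbits of the pointwise stabilizer of (b₁*,…,bᵢ*)), the set {bₙ : (b₁,…,bₙ) ∈ P} of reached fixed points is an orbit of G. -/
/-! By induction along the paths, every path `l` agrees with a translate `g • p` of the witnessed
path `p` as far as both go: the choice made by `l` at step `i` is, translated back by `g`, in the
orbit of the choice of `p` under the pointwise stabilizer of `p[0], …, p[i]`, and correcting `g`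
by that stabilizer element keeps the prefix aligned. Translation preserves both the absence of
repetitions and the final repetition, so `l` halts exactly when `p` does and `l = g • p`.
Conversely every translate of `p` is a path by equivariance, so the endpoints form the orbit of
the endpoint of `p`. -/

/-- `l` is a path of the iteration-with-choice process: `l = (b₁, …, bₙ)` with
`n ≥ 2`, `b₁ = x₀`, `bₙ₋₁ = bₙ`, `bᵢ₋₁ ≠ bᵢ` for all `1 < i < n`, and each
`bᵢ₊₁` is obtained as `step bᵢ c` for some `c ∈ choice bᵢ`. (0-based indexing.) -/
def IsWPath {X : Type*} (x₀ : X) (step : X → X → X) (choice : X → Set X)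
    (l : List X) : Prop :=
  2 ≤ l.length ∧
  l[0]? = some x₀ ∧
  l[l.length - 2]? = l[l.length - 1]? ∧
  (∀ i, i + 2 < l.length → l[i]? ≠ l[i + 1]?) ∧
  (∀ i, i + 1 < l.length →
    ∃ b c, l[i]? = some b ∧ c ∈ choice b ∧ l[i + 1]? = some (step b c))

/-- The path `l` is witnessed: for every index `i` with `i + 1 < l.length`,
the choice set of `l[i]` is an orbit of the subgroup of `G` fixing
`l[0], …, l[i]` pointwise. -/
def Witnessed (G : Type*) {X : Type*} [Group G] [MulAction G X]
    (choice : X → Set X) (l : List X) : Prop :=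
  ∀ i, i + 1 < l.length → ∀ b, l[i]? = some b → ∀ c ∈ choice b,
    choice b = {d | ∃ g : G, (∀ j ≤ i, ∀ x, l[j]? = some x → g • x = x) ∧ d = g • c}

lemma List.getElem?_map_smul {M α : Type*} [SMul M α] (g : M) (l : List α) (i : ℕ) :
    (l.map (g • ·))[i]? = g • l[i]? := by
  rw [List.getElem?_map, Option.smul_def]

namespace IsWPath

variable {G X : Type*} [Group G] [MulAction G X] {x₀ : X} {step : X → X → X}
  {choice : X → Set X}

lemma map_smul (hx₀ : ∀ g : G, g • x₀ = x₀)
    (hstep : ∀ (g : G) (b c : X), step (g • b) (g • c) = g • step b c)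
    (hchoice : ∀ (g : G) (b : X), choice (g • b) = (fun c => g • c) '' choice b)
    {l : List X} (hl : IsWPath x₀ step choice l) (g : G) :
    IsWPath x₀ step choice (l.map (g • ·)) := by
  obtain ⟨hlen, hfirst, hlast, hne, hsucc⟩ := hl
  simp only [IsWPath, List.length_map, List.getElem?_map_smul]
  refine ⟨hlen, by rw [hfirst, Option.smul_some, hx₀], by rw [hlast],
    fun i hi h => hne i hi (MulAction.injective g h), fun i hi => ?_⟩
  obtain ⟨b, c, hb, hc, hbc⟩ := hsucc i hi
  refine ⟨g • b, g • c, by rw [hb, Option.smul_some], ?_, ?_⟩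
  · rw [hchoice]
    exact Set.mem_image_of_mem _ hc
  · rw [hbc, Option.smul_some, hstep]

/-- Otherwise the final repetition of `q` would be translated into a repetition inside `l`. -/
lemma length_le_of_getElem?_eq_smul {l q : List X} (hl : IsWPath x₀ step choice l)
    (hq : IsWPath x₀ step choice q) (g : G)
    (hlq : ∀ j < min l.length q.length, l[j]? = g • q[j]?) :
    l.length ≤ q.length := by
  by_contra! hlt
  have hq2 := hq.1
  have hrepeat := hq.2.2.1
  apply hl.2.2.2.1 (q.length - 2) (by omega)
  rw [hlq _ (by omega), hlq _ (by omega), show q.length - 2 + 1 = q.length - 1 by omega,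
    hrepeat]

lemma exists_getElem?_eq_smul_of_witnessed
    (hstep : ∀ (g : G) (b c : X), step (g • b) (g • c) = g • step b c)
    (hchoice : ∀ (g : G) (b : X), choice (g • b) = (fun c => g • c) '' choice b)
    {p l : List X} (hp : IsWPath x₀ step choice p) (hw : Witnessed G choice p)
    (hl : IsWPath x₀ step choice l) :
    ∀ i < min l.length p.length, ∃ g : G, ∀ j ≤ i, l[j]? = g • p[j]? := by
  intro i hi
  induction i with
  | zero =>
    refine ⟨1, fun j hj => ?_⟩
    rw [Nat.le_zero.mp hj, one_smul, hl.2.1, hp.2.1]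
  | succ i ih =>
    obtain ⟨g, hg⟩ := ih (by omega)
    obtain ⟨b, c, hb, hc, hbc⟩ := hl.2.2.2.2 i (by omega)
    obtain ⟨a, c₀, ha, hc₀, hac₀⟩ := hp.2.2.2.2 i (by omega)
    have hba : b = g • a := by
      simpa [hb, ha] using hg i le_rfl
    rw [hba, hchoice, hw i (by omega) a ha c₀ hc₀] at hc
    obtain ⟨_, ⟨h, hfix, rfl⟩, rfl⟩ := hc
    refine ⟨g * h, fun j hj => ?_⟩
    rcases Nat.le_succ_iff.mp hj with hj | rfl
    · obtain ⟨x, hx⟩ : ∃ x, p[j]? = some x := ⟨_, List.getElem?_eq_getElem (by omega)⟩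
      rw [hg j hj, hx, Option.smul_some, Option.smul_some, mul_smul, hfix j hj x hx]
    · rw [hbc, hac₀, Option.smul_some, hba, ← hstep, mul_smul, mul_smul, hfix i le_rfl a ha]

lemma eq_map_smul_of_witnessed
    (hstep : ∀ (g : G) (b c : X), step (g • b) (g • c) = g • step b c)
    (hchoice : ∀ (g : G) (b : X), choice (g • b) = (fun c => g • c) '' choice b)
    {p l : List X} (hp : IsWPath x₀ step choice p) (hw : Witnessed G choice p)
    (hl : IsWPath x₀ step choice l) :
    ∃ g : G, l = p.map (g • ·) := by
  have hl2 := hl.1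
  have hp2 := hp.1
  obtain ⟨g, hg⟩ := exists_getElem?_eq_smul_of_witnessed hstep hchoice hp hw hl
    (min l.length p.length - 1) (by omega)
  have hlp : ∀ j < min l.length p.length, l[j]? = g • p[j]? := fun j hj => hg j (by omega)
  have hpl : ∀ j < min p.length l.length, p[j]? = g⁻¹ • l[j]? := fun j hj => by
    rw [hlp j (by omega), inv_smul_smul]
  have hlen : l.length = p.length := le_antisymm
    (hl.length_le_of_getElem?_eq_smul hp g hlp) (hp.length_le_of_getElem?_eq_smul hl g⁻¹ hpl)
  refine ⟨g, List.ext_getElem? fun j => ?_⟩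
  rw [List.getElem?_map_smul]
  by_cases hj : j < p.length
  · exact hlp j (by omega)
  · rw [List.getElem?_eq_none (by omega), List.getElem?_eq_none (by omega), Option.smul_none]

end IsWPath

/-- If some maximal halting path of the iteration-with-choice process is
witnessed, then the set of reached fixed points (the last entries of all
paths) is an orbit of `G`. -/
theorem witnessed_fixed_points_orbit {G X : Type*} [Group G] [MulAction G X]
    (x₀ : X) (hx₀ : ∀ g : G, g • x₀ = x₀)
    (step : X → X → X) (choice : X → Set X)
    (hstep : ∀ (g : G) (b c : X), step (g • b) (g • c) = g • step b c)
    (hchoice : ∀ (g : G) (b : X), choice (g • b) = (fun c => g • c) '' choice b)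
    (p : List X) (hp : IsWPath x₀ step choice p) (hw : Witnessed G choice p) :
    ∃ x : X, {y : X | ∃ l : List X, IsWPath x₀ step choice l ∧ l.getLast? = some y}
      = MulAction.orbit G x := by
  have hp_ne_nil : p ≠ [] := List.ne_nil_of_length_pos (by have := hp.1; omega)
  refine ⟨p.getLast hp_ne_nil, Set.ext fun y => ⟨?_, ?_⟩⟩
  · rintro ⟨l, hl, hy⟩
    obtain ⟨g, rfl⟩ := IsWPath.eq_map_smul_of_witnessed hstep hchoice hp hw hl
    rw [List.getLast?_map, List.getLast?_eq_some_getLast hp_ne_nil] at hy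
    exact ⟨g, Option.some_injective _ hy⟩
  · rintro ⟨g, rfl⟩
    refine ⟨p.map (g • ·), hp.map_smul hx₀ hstep hchoice g, ?_⟩
    rw [List.getLast?_map, List.getLast?_eq_some_getLast hp_ne_nil]
    rfl
end

section
/- Let G = (V,E) be a finite connected simple graph and g, g' : E → F₂ with Σ_{e∈E} g(e) = Σ_{e∈E} g'(e). Then CFI(G,g) ≅ CFI(G,g'). -/
/-- Gadget vertices of the CFI graph over a base graph `G`: pairs `(u, a)` where
`u` is a base vertex and `a : N(u) → 𝔽₂` has sum `0` over the neighborhood of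
`u` (encoded as a function on all of `V` vanishing outside `N(u)`). -/
def CFIGadgetV {V : Type*} [Fintype V] (G : SimpleGraph V) :=
  {p : V × (V → ZMod 2) // (∀ w, ¬ G.Adj p.1 w → p.2 w = 0) ∧ ∑ w, p.2 w = 0}

/-- Edge vertices of the CFI graph over a base graph `G`: triples `(u, v, i)`
where `(u, v)` is an ordered pair with `{u,v}` an edge of `G` and `i ∈ 𝔽₂`. -/
def CFIEdgeV {V : Type*} (G : SimpleGraph V) :=
  {q : V × V × ZMod 2 // G.Adj q.1 q.2.1}

/-- The CFI graph `CFI(G, g)` of a base graph `G` with respect to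
`g : E(G) → 𝔽₂`: a gadget vertex `(u, a)` is adjacent to an edge vertex
`(u, v, i)` whenever `a v = i`, and edge vertices `(u, v, i)` and `(v, u, j)`
are adjacent whenever `i + j = g {u, v}`. -/
def CFIGraph {V : Type*} [Fintype V] (G : SimpleGraph V) (g : Sym2 V → ZMod 2) :
    SimpleGraph (CFIGadgetV G ⊕ CFIEdgeV G) :=
  SimpleGraph.fromRel (fun x y =>
    (∃ (p : CFIGadgetV G) (q : CFIEdgeV G),
        x = Sum.inl p ∧ y = Sum.inr q ∧ p.1.1 = q.1.1 ∧ p.1.2 q.1.2.1 = q.1.2.2) ∨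
    (∃ q q' : CFIEdgeV G,
        x = Sum.inr q ∧ y = Sum.inr q' ∧ q.1.1 = q'.1.2.1 ∧ q.1.2.1 = q'.1.1 ∧
        q.1.2.2 + q'.1.2.2 = g (Sym2.mk q.1.1 q.1.2.1)))

/-!
A function `F` on ordered pairs of adjacent vertices whose rows `F u ·` sum to zero twists
`CFI(G, g)` into `CFI(G, g')`, where `g' {u, v} = g {u, v} + F u v + F v u`: add `F u` to the
label of every gadget vertex `(u, a)` and `F u v` to the bit of every edge vertex `(u, v, i)`.
When `G` is connected, every `c : E → 𝔽₂` of even total weight is of the form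
`{u, v} ↦ F u v + F v u` for such an `F`: for each edge `{x, y}` with `c {x, y} = 1` put a `1` at
`(x, y)` and repair the row sum at `x` with the edge parities of a walk from a fixed root `r` to
`x`. Only the row at `r` is left wrong, by the total weight of `c`, which is `0`.
-/

open Finset

lemma Sym2.ite_mk_eq_mk {α R : Type*} [DecidableEq α] [AddMonoidWithOne R] {u v x y : α}
    (hxy : x ≠ y) :
    (if s(u, v) = s(x, y) then 1 else 0 : R) =
      (if (u, v) = (x, y) then 1 else 0) + if (u, v) = (y, x) then 1 else 0 := by
  simp only [Sym2.eq_iff, Prod.mk.injEq]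
  split_ifs <;> simp_all [eq_comm]

lemma Sym2.mk_out {α : Type*} (e : Sym2 α) : s(e.out.1, e.out.2) = e := e.out_eq

namespace SimpleGraph.Walk

variable {V : Type*} [DecidableEq V] {G : SimpleGraph V}

def edgeParity {a b : V} (p : G.Walk a b) (u v : V) : ZMod 2 :=
  p.edges.count s(u, v)

variable {a b : V} (p : G.Walk a b)

lemma edgeParity_comm (u v : V) : p.edgeParity u v = p.edgeParity v u := by
  rw [edgeParity, edgeParity, Sym2.eq_swap]

lemma edgeParity_eq_zero_of_not_adj {u v : V} (huv : ¬ G.Adj u v) : p.edgeParity u v = 0 := by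
  rw [edgeParity, List.count_eq_zero_of_not_mem fun he => huv (p.edges_subset_edgeSet he),
    Nat.cast_zero]

lemma sum_edgeParity [Fintype V] (u : V) :
    ∑ v, p.edgeParity u v = (if u = a then 1 else 0) + if u = b then 1 else 0 := by
  induction p with
  | nil => simp [edgeParity, CharTwo.add_self_eq_zero]
  | @cons a c b h p ih =>
    have hac : a ≠ c := h.ne
    simp only [edgeParity] at ih ⊢
    simp only [edges_cons, List.count_cons, beq_iff_eq, Nat.cast_add, Nat.cast_ite, Nat.cast_one,
      Nat.cast_zero, sum_add_distrib, ih, eq_comm (a := s(a, c)), Sym2.ite_mk_eq_mk hac,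
      Prod.mk.injEq, ite_and, sum_ite_irrel, sum_ite_eq', mem_univ, ↓reduceIte, sum_const_zero]
    grind

def dartTwist {a x : V} (p : G.Walk a x) (y u v : V) : ZMod 2 :=
  p.edgeParity u v + if (u, v) = (x, y) then 1 else 0

lemma sum_dartTwist [Fintype V] (y u : V) :
    ∑ v, p.dartTwist y u v = if u = a then 1 else 0 := by
  simp only [dartTwist, sum_add_distrib, sum_edgeParity, Prod.mk.injEq, ite_and,
    sum_ite_irrel, sum_ite_eq', mem_univ, ↓reduceIte, sum_const_zero]
  grind

lemma dartTwist_eq_zero_of_not_adj {y u v : V} (hby : G.Adj b y) (huv : ¬ G.Adj u v) :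
    p.dartTwist y u v = 0 := by
  have : (u, v) ≠ (b, y) := by rintro ⟨⟩; exact huv hby
  rw [dartTwist, p.edgeParity_eq_zero_of_not_adj huv, if_neg this, add_zero]

lemma dartTwist_add_dartTwist_swap {y : V} (hby : b ≠ y) (u v : V) :
    p.dartTwist y u v + p.dartTwist y v u = if s(u, v) = s(b, y) then 1 else 0 := by
  rw [dartTwist, dartTwist, p.edgeParity_comm v u, Sym2.ite_mk_eq_mk hby]
  simp only [Prod.mk.injEq]
  grind

end SimpleGraph.Walk

namespace SimpleGraph

variable {V : Type*} [Fintype V]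

structure IsCFITwist (G : SimpleGraph V) (F : V → V → ZMod 2) : Prop where
  eq_zero_of_not_adj : ∀ u v, ¬ G.Adj u v → F u v = 0
  sum_eq_zero : ∀ u, ∑ v, F u v = 0

theorem Connected.exists_isCFITwist [DecidableEq V] {G : SimpleGraph V} [DecidableRel G.Adj]
    (hG : G.Connected) (c : Sym2 V → ZMod 2) (hc : ∑ e ∈ G.edgeFinset, c e = 0) :
    ∃ F, G.IsCFITwist F ∧ ∀ u v, G.Adj u v → F u v + F v u = c s(u, v) := by
  obtain ⟨r⟩ := hG.nonempty
  let W (x : V) : G.Walk r x := (hG.preconnected r x).some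
  have hadj {e} (he : e ∈ G.edgeFinset) : G.Adj e.out.1 e.out.2 := by
    rwa [← mem_edgeSet, Sym2.mk_out, ← mem_edgeFinset]
  refine ⟨fun u v => ∑ e ∈ G.edgeFinset, c e * (W e.out.1).dartTwist e.out.2 u v,
    ⟨fun u v huv => ?_, fun u => ?_⟩, fun u v huv => ?_⟩
  · exact sum_eq_zero fun e he => by
      rw [Walk.dartTwist_eq_zero_of_not_adj _ (hadj he) huv, mul_zero]
  · simp only [sum_comm (s := univ), ← mul_sum, Walk.sum_dartTwist, ← sum_mul, hc, zero_mul]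
  · simp only [← sum_add_distrib, ← mul_add]
    rw [sum_congr rfl fun e he => by
      rw [Walk.dartTwist_add_dartTwist_swap _ (hadj he).ne, Sym2.mk_out]]
    simp [mul_ite, huv]

end SimpleGraph

namespace CFIGraph

variable {V : Type*} {G : SimpleGraph V}

variable (F : V → V → ZMod 2) in
def twistEdge (q : CFIEdgeV G) : CFIEdgeV G :=
  ⟨(q.1.1, q.1.2.1, q.1.2.2 + F q.1.1 q.1.2.1), q.2⟩

lemma twistEdge_involutive (F : V → V → ZMod 2) : Function.Involutive (twistEdge (G := G) F) :=
  fun q => Subtype.ext <| Prod.ext rfl <| Prod.ext rfl <| by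
    simp [twistEdge, add_assoc, CharTwo.add_self_eq_zero]

variable [Fintype V] {g : Sym2 V → ZMod 2}

lemma not_adj_inl_inl (p p' : CFIGadgetV G) : ¬ (CFIGraph G g).Adj (.inl p) (.inl p') := by
  simp [CFIGraph]

lemma adj_inl_inr {p : CFIGadgetV G} {q : CFIEdgeV G} :
    (CFIGraph G g).Adj (.inl p) (.inr q) ↔ p.1.1 = q.1.1 ∧ p.1.2 q.1.2.1 = q.1.2.2 := by
  simp [CFIGraph]

lemma adj_inr_inr {q q' : CFIEdgeV G} :
    (CFIGraph G g).Adj (.inr q) (.inr q') ↔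
      q.1.1 = q'.1.2.1 ∧ q.1.2.1 = q'.1.1 ∧ q.1.2.2 + q'.1.2.2 = g s(q.1.1, q.1.2.1) := by
  simp only [CFIGraph, exists_and_left, SimpleGraph.fromRel_adj, ne_eq, Sum.inr.injEq,
    reduceCtorEq, exists_eq_left', false_and, exists_false, false_or]
  obtain ⟨⟨u, v, i⟩, huv⟩ := q
  obtain ⟨⟨u', v', i'⟩, -⟩ := q'
  constructor
  · rintro ⟨-, h | ⟨rfl, rfl, h⟩⟩
    exacts [h, ⟨rfl, rfl, by rwa [add_comm, Sym2.eq_swap]⟩]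
  · rintro ⟨rfl, rfl, h⟩
    exact ⟨fun heq => huv.ne (congrArg (·.1.1) heq), Or.inl ⟨rfl, rfl, h⟩⟩

variable {F : V → V → ZMod 2}

def twistGadget (hF : G.IsCFITwist F) (p : CFIGadgetV G) : CFIGadgetV G :=
  ⟨(p.1.1, p.1.2 + F p.1.1), fun w hw => by simp [p.2.1 w hw, hF.eq_zero_of_not_adj _ _ hw], by
    simp [sum_add_distrib, p.2.2, hF.sum_eq_zero]⟩

lemma twistGadget_involutive (hF : G.IsCFITwist F) : Function.Involutive (twistGadget hF) :=
  fun p => Subtype.ext <| Prod.ext rfl <| funext fun w => by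
    simp [twistGadget, add_assoc, CharTwo.add_self_eq_zero]

def twist (hF : G.IsCFITwist F) : Equiv.Perm (CFIGadgetV G ⊕ CFIEdgeV G) :=
  (twistGadget_involutive hF).toPerm.sumCongr (twistEdge_involutive F).toPerm

lemma twist_adj_twist_iff (hF : G.IsCFITwist F) {g' : Sym2 V → ZMod 2}
    (hg : ∀ u v, G.Adj u v → g s(u, v) + g' s(u, v) = F u v + F v u) {x y} :
    (CFIGraph G g').Adj (twist hF x) (twist hF y) ↔ (CFIGraph G g).Adj x y := by
  have inl_inr (p q) : (CFIGraph G g').Adj (twist hF (.inl p)) (twist hF (.inr q)) ↔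
      (CFIGraph G g).Adj (.inl p) (.inr q) := by
    simp only [twist, Equiv.sumCongr_apply, Sum.map_inl, Sum.map_inr,
      Function.Involutive.coe_toPerm, adj_inl_inr]
    refine and_congr_right fun h => ?_
    dsimp only [twistGadget, twistEdge] at h ⊢
    rw [h, Pi.add_apply, add_left_inj]
  rcases x with p | q <;> rcases y with p' | q'
  · simp only [twist, Equiv.sumCongr_apply, Sum.map_inl, not_adj_inl_inl]
  · exact inl_inr p q'
  · rw [SimpleGraph.adj_comm, inl_inr, SimpleGraph.adj_comm]
  · simp only [twist, Equiv.sumCongr_apply, Sum.map_inr, Function.Involutive.coe_toPerm,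
      adj_inr_inr]
    refine and_congr_right fun h1 => and_congr_right fun h2 => ?_
    dsimp only [twistEdge] at h1 h2 ⊢
    rw [← h1, ← h2]
    have := hg _ _ q.2
    grind

def twistIso (hF : G.IsCFITwist F) {g' : Sym2 V → ZMod 2}
    (hg : ∀ u v, G.Adj u v → g s(u, v) + g' s(u, v) = F u v + F v u) :
    CFIGraph G g ≃g CFIGraph G g' :=
  ⟨twist hF, twist_adj_twist_iff hF hg⟩

end CFIGraph

/-- Two CFI graphs over the same finite connected base graph whose
edge-labelings have the same total sum (in `𝔽₂`) are isomorphic. -/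
theorem cfi_same_parity_iso {V : Type*} [Fintype V] [DecidableEq V]
    (G : SimpleGraph V) [DecidableRel G.Adj] (hconn : G.Connected)
    (g g' : Sym2 V → ZMod 2)
    (hsum : ∑ e ∈ G.edgeFinset, g e = ∑ e ∈ G.edgeFinset, g' e) :
    Nonempty (CFIGraph G g ≃g CFIGraph G g') := by
  obtain ⟨F, hF, hFg⟩ := hconn.exists_isCFITwist (g + g') <| by
    simp only [Pi.add_apply, sum_add_distrib, hsum, CharTwo.add_self_eq_zero]
  exact ⟨CFIGraph.twistIso hF fun u v huv => (hFg u v huv).symm⟩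
end
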